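/- arXiv:1407.0055 — 2 statements merged into one kernel-verified Lean document; each statement's English description precedes it below -/
import Mathlib

section
/- Let g ∈ S(d) ⊂ C(d) be a pure permutation whose cycle type is an odd partition γ of d, and let C_γ be its conjugacy class in the Sergeev group C(d). Then C_γ and εC_γ are disjoint conjugacy classes. -/
/-- Relations of the Clifford group `Cliff(d)`: generators `ξ i = of (some i)` and
`ε = of none`, with `ξ i ² = 1`, `ε² = 1`, `ε` central, and
`ξ i ξ j = ε ξ j ξ i` for `i ≠ j`. -/
def cliffRels (d : ℕ) : Set (FreeGroup (Option (Fin d))) :=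
  {r | (∃ i : Fin d, r = .of (some i) * .of (some i)) ∨
    r = .of none * .of none ∨
    (∃ i : Fin d, r = .of none * .of (some i) * (.of none)⁻¹ * (.of (some i))⁻¹) ∨
    (∃ i j : Fin d, i ≠ j ∧
      r = .of (some i) * .of (some j) * ((.of none) * .of (some j) * .of (some i))⁻¹)}

/-- The Clifford group `Cliff(d)`. -/
def CliffordGroup (d : ℕ) : Type := PresentedGroup (cliffRels d)

instance (d : ℕ) : Group (CliffordGroup d) := by unfold CliffordGroup; infer_instance

/-- The generator `ξ i` of the Clifford group. -/
def cliffXi {d : ℕ} (i : Fin d) : CliffordGroup d := PresentedGroup.of (some i)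

/-- The central generator `ε` of the Clifford group. -/
def cliffEps (d : ℕ) : CliffordGroup d := PresentedGroup.of none

/-! Write `ξ^v` (for `v : Fin d → 𝔽₂`) for the product of the `ξ i` with `v i = 1` in increasing
order of `i`. Every element of `Cliff(d)` is `ε^s ξ^v`, and reordering a product of generators
multiplies by `ε` once per transposition, so a permutation `g` sends `ξ^v` to `ε^q ξ^(v ∘ g⁻¹)`,
where `q` counts the inversions of `g` inside the support of `v`. Conjugating `g` into `εg` in the
Sergeev group amounts to finding `b = ε^s ξ^v` with `b · g(b)⁻¹ = ε`: this forces `v` to be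
`g`-invariant and `q = 1`. But on a `g`-invariant set `g` restricts to a permutation of odd order,
hence even, and the parity of its inversion count is its sign, so `q = 0`. -/

namespace Equiv.Perm

section OddOrder

variable {α : Type*} [Fintype α] [DecidableEq α]

theorem sign_eq_one_of_odd_orderOf {σ : Perm α} (hσ : Odd (orderOf σ)) : sign σ = 1 := by
  obtain ⟨k, hk⟩ := hσ
  have h := congrArg sign (pow_orderOf_eq_one σ)
  rwa [map_pow, hk, pow_succ, pow_mul, Int.units_sq, one_pow, one_mul, map_one] at h

theorem odd_orderOf_of_odd_cycleType {σ : Perm α} (h : ∀ n ∈ σ.cycleType, Odd n) :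
    Odd (orderOf σ) := by
  rw [← lcm_cycleType, ← Nat.not_even_iff_odd, even_iff_two_dvd]
  intro h2
  obtain ⟨n, hn, h2n⟩ := Nat.prime_two.prime.exists_mem_multiset_dvd
    (h2.trans (Multiset.lcm_dvd.2 fun _ => Multiset.dvd_prod))
  exact Nat.not_even_iff_odd.2 (h n hn) (even_iff_two_dvd.2 h2n)

end OddOrder

section Inversions

variable {α β : Type*} [LinearOrder α] [Fintype α] [LinearOrder β] [Fintype β]

def numInversions (σ : Perm α) : ℕ :=
  (Finset.univ.filter fun p : α × α => p.2 < p.1 ∧ σ p.1 < σ p.2).card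

theorem numInversions_permCongr (e : α ≃o β) (σ : Perm α) :
    numInversions (e.toEquiv.permCongr σ) = numInversions σ := by
  refine (Finset.card_equiv (e.toEquiv.prodCongr e.toEquiv) fun p => ?_).symm
  simp

theorem signAux_eq_sign {n : ℕ} (σ : Perm (Fin n)) : signAux σ = sign σ := by
  induction σ using swap_induction_on with
  | one => simp
  | swap_mul f x y hxy ih => rw [signAux_mul, signAux_swap hxy, map_mul, sign_swap hxy, ih]

theorem sign_eq_neg_one_pow_numInversions_fin {n : ℕ} (σ : Perm (Fin n)) :
    sign σ = (-1) ^ numInversions σ := by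
  rw [← signAux_eq_sign, signAux, Finset.prod_ite, Finset.prod_const, Finset.prod_const,
    one_pow, mul_one, numInversions]
  congr 1
  refine Finset.card_equiv (Equiv.sigmaEquivProd _ _) fun x => ?_
  simp only [Finset.mem_filter, mem_finPairsLT, Finset.mem_univ, true_and,
    Equiv.sigmaEquivProd_apply]
  exact and_congr_right fun hlt => (σ.injective.ne hlt.ne').le_iff_lt

theorem sign_eq_neg_one_pow_numInversions (σ : Perm α) : sign σ = (-1) ^ numInversions σ := by
  let e := (Fintype.orderIsoFinOfCardEq α rfl).symm
  rw [← sign_permCongr e.toEquiv, ← numInversions_permCongr e,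
    sign_eq_neg_one_pow_numInversions_fin]

theorem even_numInversions_of_odd_orderOf {σ : Perm α}
    (hσ : Odd (orderOf σ)) : Even (numInversions σ) := by
  have h := sign_eq_one_of_odd_orderOf hσ
  rwa [sign_eq_neg_one_pow_numInversions, neg_one_pow_eq_one_iff_even (by decide)] at h

end Inversions

theorem orderOf_subtypePerm_dvd {α : Type*} (σ : Perm α) {p : α → Prop}
    (h : ∀ x, p (σ x) ↔ p x) : orderOf (σ.subtypePerm h) ∣ orderOf σ :=
  orderOf_dvd_of_pow_eq_one <| by
    rw [subtypePerm_pow]; ext; simp [pow_orderOf_eq_one]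

end Equiv.Perm

open Matrix Equiv Perm

section Matrices

variable (ι : Type*) [LinearOrder ι]

def ltMatrix : Matrix ι ι (ZMod 2) :=
  Matrix.of fun i j => if j < i then 1 else 0

variable {ι}

def Equiv.Perm.inversionMatrix (g : Perm ι) : Matrix ι ι (ZMod 2) :=
  Matrix.of fun i j => if j < i ∧ g i < g j then 1 else 0

theorem Equiv.Perm.inversionMatrix_add_transpose (g : Perm ι) :
    g.inversionMatrix + g.inversionMatrixᵀ = ltMatrix ι + (ltMatrix ι).submatrix g g := by
  ext i j
  simp only [inversionMatrix, ltMatrix, Matrix.add_apply, transpose_apply, submatrix_apply,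
    of_apply]
  rcases eq_or_ne i j with rfl | hij
  · simp
  rcases hij.lt_or_gt with h | h <;> rcases (g.injective.ne hij).lt_or_gt with hg | hg <;>
    simp [h, h.not_gt, hg, hg.not_gt, CharTwo.add_self_eq_zero]

end Matrices

/-- `⟨s, v⟩` stands for `ε^s ξ^v`; `ltMatrix` counts the transpositions needed to sort
`ξ^v ξ^w`. -/
@[ext]
structure CliffordModel (ι : Type*) where
  sgn : ZMod 2
  vec : ι → ZMod 2

namespace CliffordModel

instance {ι : Type*} : One (CliffordModel ι) := ⟨⟨0, 0⟩⟩

@[simp] theorem one_sgn {ι : Type*} : (1 : CliffordModel ι).sgn = 0 := rfl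
@[simp] theorem one_vec {ι : Type*} : (1 : CliffordModel ι).vec = 0 := rfl

variable {ι : Type*} [LinearOrder ι] [Fintype ι]

instance : Mul (CliffordModel ι) :=
  ⟨fun a b => ⟨a.sgn + b.sgn + a.vec ⬝ᵥ ltMatrix ι *ᵥ b.vec, a.vec + b.vec⟩⟩

instance : Inv (CliffordModel ι) := ⟨fun a => ⟨a.sgn + a.vec ⬝ᵥ ltMatrix ι *ᵥ a.vec, a.vec⟩⟩

@[simp] theorem mul_sgn (a b : CliffordModel ι) :
    (a * b).sgn = a.sgn + b.sgn + a.vec ⬝ᵥ ltMatrix ι *ᵥ b.vec := rfl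
@[simp] theorem mul_vec (a b : CliffordModel ι) : (a * b).vec = a.vec + b.vec := rfl
@[simp] theorem inv_sgn (a : CliffordModel ι) :
    a⁻¹.sgn = a.sgn + a.vec ⬝ᵥ ltMatrix ι *ᵥ a.vec := rfl
@[simp] theorem inv_vec (a : CliffordModel ι) : a⁻¹.vec = a.vec := rfl

instance : Group (CliffordModel ι) where
  mul_assoc a b c := by
    ext
    · simp only [mul_sgn, mul_vec, mulVec_add, dotProduct_add, add_dotProduct]; ring
    · simp only [mul_vec, add_assoc]
  one_mul a := by ext <;> simp
  mul_one a := by ext <;> simp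
  inv_mul_cancel a := by
    ext
    · simp only [mul_sgn, inv_sgn, inv_vec, one_sgn]; grind
    · simp only [mul_vec, inv_vec, one_vec, Pi.add_apply, Pi.zero_apply,
        CharTwo.add_self_eq_zero]

def twist (g : Perm ι) (v : ι → ZMod 2) : ZMod 2 := v ⬝ᵥ g.inversionMatrix *ᵥ v

theorem twist_add (g : Perm ι) (v w : ι → ZMod 2) :
    twist g (v + w) = twist g v + twist g w + v ⬝ᵥ ltMatrix ι *ᵥ w
      + (v ∘ g.symm) ⬝ᵥ ltMatrix ι *ᵥ (w ∘ g.symm) := by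
  have hcross : v ⬝ᵥ g.inversionMatrix *ᵥ w + w ⬝ᵥ g.inversionMatrix *ᵥ v
      = v ⬝ᵥ ltMatrix ι *ᵥ w + (v ∘ g.symm) ⬝ᵥ ltMatrix ι *ᵥ (w ∘ g.symm) := by
    rw [dotProduct_mulVec w, ← mulVec_transpose, dotProduct_comm (_ *ᵥ w), ← dotProduct_add,
      ← add_mulVec, inversionMatrix_add_transpose, add_mulVec, dotProduct_add,
      submatrix_mulVec_equiv, ← comp_equiv_symm_dotProduct]
  simp only [twist, mulVec_add, dotProduct_add, add_dotProduct]
  linear_combination hcross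

@[simp] theorem twist_single (g : Perm ι) (i : ι) : twist g (Pi.single i 1) = 0 := by
  simp [twist, inversionMatrix]

def twistAut (g : Perm ι) : CliffordModel ι →* CliffordModel ι where
  toFun a := ⟨a.sgn + twist g a.vec, a.vec ∘ g.symm⟩
  map_one' := by ext <;> simp [twist]
  map_mul' a b := by
    ext
    · simp only [mul_sgn, mul_vec, twist_add]; grind
    · rfl

@[simp] theorem twistAut_sgn (g : Perm ι) (a : CliffordModel ι) :
    (twistAut g a).sgn = a.sgn + twist g a.vec := rfl
@[simp] theorem twistAut_vec (g : Perm ι) (a : CliffordModel ι) :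
    (twistAut g a).vec = a.vec ∘ g.symm := rfl

theorem twist_eq_numInversions {g : Perm ι} {v : ι → ZMod 2} (hv : ∀ i, v (g i) = v i) :
    twist g v = numInversions (g.subtypePerm (p := fun i => v i = 1) fun i => by rw [hv]) := by
  have hbool : ∀ x : ZMod 2, x = 0 ∨ x = 1 := by decide
  have hsum : twist g v = ∑ p : ι × ι,
      if (p.2 < p.1 ∧ g p.1 < g p.2) ∧ v p.1 = 1 ∧ v p.2 = 1 then 1 else 0 := by
    simp only [twist, dotProduct, mulVec, inversionMatrix, of_apply, Finset.mul_sum,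
      ← Finset.univ_product_univ, Finset.sum_product]
    refine Finset.sum_congr rfl fun i _ => Finset.sum_congr rfl fun j _ => ?_
    obtain hi | hi := hbool (v i) <;> obtain hj | hj := hbool (v j) <;> simp [hi, hj]
  rw [hsum, Finset.sum_boole, numInversions]
  congr 1
  refine (Finset.card_bij (fun q _ => (q.1.1, q.2.1)) ?_ ?_ ?_).symm
  · rintro ⟨⟨i, hi⟩, ⟨j, hj⟩⟩ hq
    simp only [Finset.mem_filter, Finset.mem_univ, true_and, subtypePerm_apply,
      Subtype.mk_lt_mk] at hq ⊢
    exact ⟨hq, hi, hj⟩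
  · rintro ⟨⟨i, hi⟩, ⟨j, hj⟩⟩ _ ⟨⟨i', hi'⟩, ⟨j', hj'⟩⟩ _ h
    obtain ⟨rfl, rfl⟩ := Prod.mk.inj h
    rfl
  · rintro ⟨i, j⟩ hp
    simp only [Finset.mem_filter, Finset.mem_univ, true_and] at hp
    exact ⟨(⟨i, hp.2.1⟩, ⟨j, hp.2.2⟩), by simpa [subtypePerm_apply] using hp.1, rfl⟩

theorem mul_twistAut_inv_ne {g : Perm ι} (hg : Odd (orderOf g)) (b : CliffordModel ι) :
    b * twistAut g b⁻¹ ≠ ⟨1, 0⟩ := by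
  intro h
  have hfix : ∀ i, b.vec (g i) = b.vec i := fun i => by
    have := congrFun (congrArg vec h) (g i)
    simpa only [mul_vec, twistAut_vec, inv_vec, Pi.add_apply, Function.comp_apply,
      symm_apply_apply, Pi.zero_apply, CharTwo.add_eq_zero] using this
  have hcomp : b.vec ∘ g.symm = b.vec := funext fun i => by
    simpa using (hfix (g.symm i)).symm
  have htwist : twist g b.vec = 1 := by
    have := congrArg sgn h
    simp only [mul_sgn, twistAut_sgn, twistAut_vec, inv_sgn, inv_vec, hcomp] at this
    grind
  rw [twist_eq_numInversions hfix, CharTwo.natCast_eq_ite, if_pos (even_numInversions_of_odd_orderOf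
    (hg.of_dvd_nat (orderOf_subtypePerm_dvd _ _)))] at htwist
  exact zero_ne_one htwist

end CliffordModel

namespace CliffordGroup

open CliffordModel

variable {d : ℕ}

def genModel : Option (Fin d) → CliffordModel (Fin d)
  | none => ⟨1, 0⟩
  | some i => ⟨0, Pi.single i 1⟩

theorem lift_genModel_eq_one : ∀ r ∈ cliffRels d, FreeGroup.lift genModel r = 1 := by
  rintro r (⟨i, rfl⟩ | rfl | ⟨i, rfl⟩ | ⟨i, j, hij, rfl⟩) <;>
    ext <;> simp [genModel, ltMatrix, mulVec_add, CharTwo.add_self_eq_zero]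
  rcases hij.lt_or_gt with h | h <;> simp [h, h.not_gt, CharTwo.add_self_eq_zero]

def toModel (d : ℕ) : CliffordGroup d →* CliffordModel (Fin d) :=
  PresentedGroup.toGroup lift_genModel_eq_one

@[simp] theorem toModel_xi (i : Fin d) : toModel d (cliffXi i) = ⟨0, Pi.single i 1⟩ :=
  PresentedGroup.toGroup.of lift_genModel_eq_one

@[simp] theorem toModel_eps : toModel d (cliffEps d) = ⟨1, 0⟩ :=
  PresentedGroup.toGroup.of lift_genModel_eq_one

theorem toModel_apply_aut {φ : Perm (Fin d) →* MulAut (CliffordGroup d)}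
    (hφ : ∀ (σ : Perm (Fin d)) (i : Fin d), φ σ (cliffXi i) = cliffXi (σ i))
    (hφε : ∀ σ : Perm (Fin d), φ σ (cliffEps d) = cliffEps d)
    (g : Perm (Fin d)) (a : CliffordGroup d) :
    toModel d (φ g a) = twistAut g (toModel d a) := by
  suffices (toModel d).comp (φ g).toMonoidHom = (twistAut g).comp (toModel d) from
    DFunLike.congr_fun this a
  refine PresentedGroup.ext fun x => ?_
  rcases x with _ | i
  · change toModel d (φ g (cliffEps d)) = twistAut g (toModel d (cliffEps d))
    ext <;> simp [hφε, twist]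
  · change toModel d (φ g (cliffXi i)) = twistAut g (toModel d (cliffXi i))
    ext <;> simp [hφ, Pi.single_apply, Equiv.eq_symm_apply, eq_comm]

theorem cliffEps_mem_center (d : ℕ) : cliffEps d ∈ Subgroup.center (CliffordGroup d) := by
  refine Subgroup.mem_center_iff.2 fun x => ?_
  have hx : x ∈ Subgroup.centralizer {cliffEps d} := by
    refine PresentedGroup.generated_by _ _ (fun j => Subgroup.mem_centralizer_singleton_iff.2 ?_) x
    rcases j with _ | i
    · rfl
    · -- the relation `ε ξ i ε⁻¹ (ξ i)⁻¹ = 1`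
      have h := PresentedGroup.one_of_mem (rels := cliffRels d)
        (Or.inr (Or.inr (Or.inl ⟨i, rfl⟩)))
      simp only [map_mul, map_inv] at h
      exact (commutatorElement_eq_one_iff_commute.1 h).symm
  exact Subgroup.mem_centralizer_singleton_iff.1 hx

theorem mul_apply_inv_ne_cliffEps {φ : Perm (Fin d) →* MulAut (CliffordGroup d)}
    (hφ : ∀ (σ : Perm (Fin d)) (i : Fin d), φ σ (cliffXi i) = cliffXi (σ i))
    (hφε : ∀ σ : Perm (Fin d), φ σ (cliffEps d) = cliffEps d)
    {g : Perm (Fin d)} (hg : Odd (orderOf g)) (b : CliffordGroup d) :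
    b * φ g b⁻¹ ≠ cliffEps d := fun h => by
  have := congrArg (toModel d) h
  rw [map_mul, toModel_apply_aut hφ hφε, map_inv, toModel_eps] at this
  exact mul_twistAut_inv_ne hg _ this

end CliffordGroup

section Conjugacy

variable {M : Type*} [Group M]

theorem isConj_mul_left_iff {z : M} (hz : z ∈ Subgroup.center M) {a b : M} :
    IsConj (z * a) (z * b) ↔ IsConj a b := by
  have hmove : ∀ c x : M, c * (z * x) * c⁻¹ = z * (c * x * c⁻¹) := fun c x => by
    rw [← mul_assoc c, Subgroup.mem_center_iff.1 hz c, mul_assoc z, mul_assoc z, mul_assoc]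
  simp only [isConj_iff, hmove, mul_right_inj]

theorem image_mul_left_setOf_isConj {z : M} (hz : z ∈ Subgroup.center M) (a : M) :
    (z * ·) '' {x | IsConj a x} = {x | IsConj (z * a) x} := by
  ext x
  rw [Set.image_mul_left, Set.mem_preimage, Set.mem_ofPred_eq, Set.mem_ofPred_eq,
    ← isConj_mul_left_iff hz, mul_inv_cancel_left]

theorem disjoint_setOf_isConj {a b : M} (h : ¬IsConj a b) :
    Disjoint {x | IsConj a x} {x | IsConj b x} :=
  Set.disjoint_left.2 fun _ ha hb => h (ha.trans hb.symm)

end Conjugacy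

namespace SemidirectProduct

variable {N G : Type*} [Group N] [Group G] {φ : G →* MulAut N}

theorem inl_mem_center {n : N} (hn : n ∈ Subgroup.center N) (hφ : ∀ g, φ g n = n) :
    (inl n : N ⋊[φ] G) ∈ Subgroup.center (N ⋊[φ] G) := by
  refine Subgroup.mem_center_iff.2 fun x => ?_
  ext
  · simp [hφ, Subgroup.mem_center_iff.1 hn]
  · simp

theorem exists_mul_apply_inv_eq_of_isConj {n : N} {g : G}
    (h : IsConj (inr g : N ⋊[φ] G) (inl n * inr g)) : ∃ b : N, b * φ g b⁻¹ = n := by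
  obtain ⟨c, hc⟩ := isConj_iff.1 h
  have hright : c.right * g * c.right⁻¹ = g := by simpa using congrArg right hc
  refine ⟨c.left, ?_⟩
  have hleft := congrArg left hc
  simp only [mul_left, inv_left, left_inr, right_inr, mul_right, left_inl, right_inl, map_one,
    mul_one, ← MulAut.mul_apply, ← map_mul] at hleft
  rwa [hright] at hleft

end SemidirectProduct

open SemidirectProduct

/-- For a pure permutation `g ∈ S(d) ⊂ C(d)` with odd cycle type `γ`, the conjugacy
class `C_γ` of `g` in the Sergeev group and its translate `εC_γ` are disjoint, and
`εC_γ` is again a conjugacy class (that of `ε·g`). -/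
theorem stmt_8 (d : ℕ) (φ : Equiv.Perm (Fin d) →* MulAut (CliffordGroup d))
    (hφ : ∀ (σ : Equiv.Perm (Fin d)) (i : Fin d), φ σ (cliffXi i) = cliffXi (σ i))
    (hφε : ∀ σ : Equiv.Perm (Fin d), φ σ (cliffEps d) = cliffEps d)
    (g : Equiv.Perm (Fin d)) (γ : Nat.Partition d)
    (hg : (Equiv.Perm.partition g).parts = γ.parts)
    (hodd : ∀ p ∈ γ.parts, Odd p) :
    Disjoint {x : CliffordGroup d ⋊[φ] Equiv.Perm (Fin d) | IsConj (inr g) x}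
        ((fun x => inl (cliffEps d) * x) ''
          {x : CliffordGroup d ⋊[φ] Equiv.Perm (Fin d) | IsConj (inr g) x}) ∧
      (fun x => inl (cliffEps d) * x) ''
          {x : CliffordGroup d ⋊[φ] Equiv.Perm (Fin d) | IsConj (inr g) x} =
        {x : CliffordGroup d ⋊[φ] Equiv.Perm (Fin d) |
          IsConj (inl (cliffEps d) * inr g) x} := by
  have hg_odd : Odd (orderOf g) := odd_orderOf_of_odd_cycleType fun n hn =>
    hodd n (hg ▸ g.parts_partition ▸ Multiset.mem_add.2 (Or.inl hn))
  have hnot : ¬IsConj (inr g) (inl (cliffEps d) * inr g : CliffordGroup d ⋊[φ] Perm (Fin d)) :=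
    fun h => (exists_mul_apply_inv_eq_of_isConj h).elim
      (CliffordGroup.mul_apply_inv_ne_cliffEps hφ hφε hg_odd)
  have himage := image_mul_left_setOf_isConj
    (inl_mem_center (φ := φ) (CliffordGroup.cliffEps_mem_center d) hφε) (inr g)
  exact ⟨himage ▸ disjoint_setOf_isConj hnot, himage⟩
end

section
/- Assume the orthogonality Σ_{γ∈OP(d)} ϑ_γ f_γ(λ) f_γ(μ) = δ_{λμ}/(2c_λ²) if λ ∈ SP⁺(d) and = δ_{λμ}/c_λ² if λ ∈ SP⁻(d). Define H(h,±)_{α_1,…,α_k} = Σ_{λ∈SP⁺(d)} 2^{1−h} c_λ^{2−2h} ∏_i f_{α_i}(λ) ± Σ_{λ∈SP⁻(d)} c_λ^{2−2h} ∏_i f_{α_i}(λ). Then for all h₁, h₂ ≥ 0, parities p₁, p₂ ∈ {±} and odd partitions α_1,…,α_s, β_1,…,β_r: H(h₁+h₂, p₁·p₂)_{α_1,…,α_s,β_1,…,β_r} = Σ_{γ∈OP(d)} ϑ_γ · H(h₁,p₁)_{α_1,…,α_s,γ} · H(h₂,p₂)_{β_1,…,β_r,γ}. -/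
/-!
Write `H(h,s)_α = ∑_λ w_{h,s}(λ) ∏ᵢ f_{αᵢ}(λ)`. Since `∏ f_{(α,γ)ᵢ}(λ) = (∏ f_{αᵢ}(λ)) f_γ(λ)`,
the right-hand side is `∑_γ ϑ_γ (∑_λ x_λ f_γ(λ)) (∑_μ y_μ f_γ(μ))`, which the orthogonality
relation collapses to the diagonal `∑_λ x_λ y_λ D_λ` with `D_λ = 1/(2c_λ²)` or `1/c_λ²`.
The normalisations in Gunningham's formula are exactly such that
`w_{h₁,s₁}(λ) w_{h₂,s₂}(λ) D_λ = w_{h₁+h₂,s₁s₂}(λ)`.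
-/

open Finset

/-- Gunningham's closed formula for the (normalized) spin Hurwitz numbers:
`H(h,s)_{α₁,…,α_k} = ∑_{λ∈SP⁺} 2^{1−h} c_λ^{2−2h} ∏ f_{αᵢ}(λ) + s·∑_{λ∈SP⁻} c_λ^{2−2h} ∏ f_{αᵢ}(λ)`
where the sign `s ∈ {1,−1}` records the parity. -/
noncomputable def gunninghamH {Γ Λ : Type*} [Fintype Λ]
    (plus : Λ → Prop) [DecidablePred plus] (c : Λ → ℝ) (f : Γ → Λ → ℝ)
    (h : ℕ) (s : ℝ) {k : ℕ} (α : Fin k → Γ) : ℝ :=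
  (∑ lam ∈ univ.filter plus,
      (2 : ℝ) ^ ((1 : ℤ) - h) * c lam ^ ((2 : ℤ) - 2 * h) * ∏ i, f (α i) lam) +
    s * ∑ lam ∈ univ.filter fun lam => ¬ plus lam,
      c lam ^ ((2 : ℤ) - 2 * h) * ∏ i, f (α i) lam

noncomputable def gunninghamCoeff {Λ : Type*} (plus : Λ → Prop) [DecidablePred plus]
    (c : Λ → ℝ) (h : ℕ) (s : ℝ) (lam : Λ) : ℝ :=
  if plus lam then (2 : ℝ) ^ ((1 : ℤ) - h) * c lam ^ ((2 : ℤ) - 2 * h)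
  else s * c lam ^ ((2 : ℤ) - 2 * h)

theorem gunninghamH_eq_sum_coeff {Γ Λ : Type*} [Fintype Λ] (plus : Λ → Prop)
    [DecidablePred plus] (c : Λ → ℝ) (f : Γ → Λ → ℝ) (h : ℕ) (s : ℝ) {k : ℕ}
    (α : Fin k → Γ) :
    gunninghamH plus c f h s α =
      ∑ lam, gunninghamCoeff plus c h s lam * ∏ i, f (α i) lam := by
  simp only [gunninghamH, gunninghamCoeff, ite_mul, sum_ite, mul_sum, mul_assoc]

theorem gunninghamCoeff_mul_mul {Λ : Type*} (plus : Λ → Prop) [DecidablePred plus]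
    (c : Λ → ℝ) (h₁ h₂ : ℕ) (s₁ s₂ : ℝ) (lam : Λ) (hc : c lam ≠ 0) :
    gunninghamCoeff plus c h₁ s₁ lam * gunninghamCoeff plus c h₂ s₂ lam *
        (if plus lam then 1 / (2 * c lam ^ 2) else 1 / c lam ^ 2) =
      gunninghamCoeff plus c (h₁ + h₂) (s₁ * s₂) lam := by
  have hc2 : c lam ^ ((2 : ℤ) - 2 * h₁) * c lam ^ ((2 : ℤ) - 2 * h₂) =
      c lam ^ ((2 : ℤ) - 2 * ↑(h₁ + h₂)) * c lam ^ 2 := by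
    rw [← zpow_add₀ hc, ← zpow_natCast, ← zpow_add₀ hc]
    congr 1
    push_cast
    ring
  have h22 : (2 : ℝ) ^ ((1 : ℤ) - h₁) * 2 ^ ((1 : ℤ) - h₂) = 2 ^ ((1 : ℤ) - ↑(h₁ + h₂)) * 2 := by
    rw [← zpow_add₀ two_ne_zero, ← zpow_add_one₀ two_ne_zero]
    congr 1
    push_cast
    ring
  unfold gunninghamCoeff
  split_ifs
  · field_simp
    linear_combination (2 : ℝ) ^ ((1 : ℤ) - h₁) * 2 ^ ((1 : ℤ) - h₂) * hc2 +
      c lam ^ 2 * c lam ^ ((2 : ℤ) - 2 * ↑(h₁ + h₂)) * h22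
  · field_simp
    linear_combination s₁ * s₂ * hc2

theorem sum_mul_sum_mul_sum_of_orthogonal {Γ Λ : Type*} [Fintype Γ] [Fintype Λ]
    [DecidableEq Λ] (f : Γ → Λ → ℝ) (ϑ : Γ → ℝ) (D : Λ → ℝ)
    (horth : ∀ l m, ∑ γ, ϑ γ * f γ l * f γ m = if l = m then D l else 0) (x y : Λ → ℝ) :
    ∑ γ, ϑ γ * (∑ l, x l * f γ l) * (∑ m, y m * f γ m) = ∑ l, x l * y l * D l := by
  calc ∑ γ, ϑ γ * (∑ l, x l * f γ l) * (∑ m, y m * f γ m)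
      = ∑ γ, ∑ l, ∑ m, x l * y m * (ϑ γ * f γ l * f γ m) := by
        refine sum_congr rfl fun γ _ => ?_
        simp only [mul_sum, sum_mul]
        rw [sum_comm]
        exact sum_congr rfl fun l _ => sum_congr rfl fun m _ => by ring
    _ = ∑ l, ∑ m, x l * y m * ∑ γ, ϑ γ * f γ l * f γ m := by
        simp only [mul_sum]
        rw [sum_comm]
        exact sum_congr rfl fun l _ => sum_comm
    _ = ∑ l, x l * y l * D l := by simp [horth]

theorem stmt_16_general {Γ Λ : Type*} [Fintype Γ] [Fintype Λ] [DecidableEq Λ]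
    (plus : Λ → Prop) [DecidablePred plus]
    (f : Γ → Λ → ℝ) (ϑ : Γ → ℝ) (c : Λ → ℝ)
    (hc : ∀ lam, 0 < c lam)
    (horth : ∀ lam mu : Λ,
      ∑ γ : Γ, ϑ γ * f γ lam * f γ mu =
        if lam = mu then (if plus lam then 1 / (2 * c lam ^ 2) else 1 / c lam ^ 2) else 0)
    (h₁ h₂ : ℕ) (s₁ s₂ : ℝ)
    {s r : ℕ} (α : Fin s → Γ) (β : Fin r → Γ) :
    gunninghamH plus c f (h₁ + h₂) (s₁ * s₂) (Fin.append α β) =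
      ∑ γ : Γ, ϑ γ * gunninghamH plus c f h₁ s₁ (Fin.snoc α γ) *
        gunninghamH plus c f h₂ s₂ (Fin.snoc β γ) := by
  simp only [gunninghamH_eq_sum_coeff, Fin.prod_univ_castSucc, Fin.snoc_castSucc, Fin.snoc_last,
    ← mul_assoc]
  rw [sum_mul_sum_mul_sum_of_orthogonal f ϑ _ horth]
  refine sum_congr rfl fun lam _ => ?_
  rw [← gunninghamCoeff_mul_mul plus c h₁ h₂ s₁ s₂ lam (hc lam).ne', Fin.prod_univ_add]
  simp only [Fin.append_left, Fin.append_right]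
  ring

/-- Gunningham's formula implies the Lee–Parker gluing theorem: assuming the
orthogonality `∑_γ ϑ_γ f_γ(λ) f_γ(μ) = δ_{λμ}/(2c_λ²)` for `λ ∈ SP⁺` and
`= δ_{λμ}/c_λ²` for `λ ∈ SP⁻`, one has
`H(h₁+h₂, s₁s₂)_{α,β} = ∑_γ ϑ_γ H(h₁,s₁)_{α,γ} H(h₂,s₂)_{β,γ}`. -/
theorem stmt_16 {Γ Λ : Type*} [Fintype Γ] [Fintype Λ] [DecidableEq Λ]
    (plus : Λ → Prop) [DecidablePred plus]
    (f : Γ → Λ → ℝ) (ϑ : Γ → ℝ) (c : Λ → ℝ)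
    (hϑ : ∀ γ, 0 < ϑ γ) (hc : ∀ lam, 0 < c lam)
    (horth : ∀ lam mu : Λ,
      ∑ γ : Γ, ϑ γ * f γ lam * f γ mu =
        if lam = mu then (if plus lam then 1 / (2 * c lam ^ 2) else 1 / c lam ^ 2) else 0)
    (h₁ h₂ : ℕ) (s₁ s₂ : ℝ) (hs₁ : s₁ = 1 ∨ s₁ = -1) (hs₂ : s₂ = 1 ∨ s₂ = -1)
    {s r : ℕ} (α : Fin s → Γ) (β : Fin r → Γ) :
    gunninghamH plus c f (h₁ + h₂) (s₁ * s₂) (Fin.append α β) =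
      ∑ γ : Γ, ϑ γ * gunninghamH plus c f h₁ s₁ (Fin.snoc α γ) *
        gunninghamH plus c f h₂ s₂ (Fin.snoc β γ) :=
  stmt_16_general plus f ϑ c hc horth h₁ h₂ s₁ s₂ α β
end
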